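/- arXiv:1811.06800 — 2 statements merged into one kernel-verified Lean document; each statement's English description precedes it below -/
import Mathlib

section
/- Let j ≥ 0, ρ > 1, and define Q_j(ξ) = ∫_0^1 P_j(c)/(ξ − c) dc for ξ ∈ ℂ with |ξ| = ρ. Then for every ξ with |ξ| = ρ, |Q_j(ξ)| ≤ √(2j+1)/((ρ − 1) ρ^j). -/
/-- The shifted and scaled Legendre polynomial on `[0,1]`, via Rodrigues' formula:
`P_j(x) = (√(2j+1)/j!) (d/dx)^j [(x² - x)^j]`. -/
noncomputable def legendreP (j : ℕ) : ℝ → ℝ :=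
  fun x => (Real.sqrt (2 * (j : ℝ) + 1) / (Nat.factorial j : ℝ)) *
    iteratedDeriv j (fun y : ℝ => (y ^ 2 - y) ^ j) x

/-- `Q_j(ξ) = ∫_0^1 P_j(c)/(ξ - c) dc`. -/
noncomputable def legendreQ (j : ℕ) (ξ : ℂ) : ℂ :=
  ∫ c in (0:ℝ)..1, (legendreP j c : ℂ) / (ξ - (c : ℂ))

/-!
Every derivative of order `< j` of `(c² - c)^j` vanishes at `0` and `1`, so integrating by parts
`j` times moves the `j` derivatives of Rodrigues' formula onto the Cauchy kernel `1/(ξ - c)`: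
`Q_j(ξ) = (-1)^j √(2j+1) ∫₀¹ (c² - c)^j / (ξ - c)^(j+1) dc`.
For `c ∈ [0,1]` we have `|ξ - c| ≥ ρ - c ≥ ρ - 1` and `ρ c (1 - c) ≤ ρ - c`, so the integrand is
at most `((c - c²)/|ξ - c|)^j / |ξ - c| ≤ ρ^(-j) / (ρ - 1)`.
-/

open Polynomial Set intervalIntegral
open scoped Nat Interval

theorem Polynomial.iteratedDeriv_eval {𝕜 : Type*} [NontriviallyNormedField 𝕜] (p : 𝕜[X]) (n : ℕ) :
    iteratedDeriv n (fun x => p.eval x) = fun x => (derivative^[n] p).eval x := by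
  induction n with
  | zero => simp
  | succ n ih =>
    ext x
    rw [iteratedDeriv_succ, ih, Polynomial.deriv, Function.iterate_succ_apply']

theorem Polynomial.isRoot_iterate_derivative_of_pow_dvd {R : Type*} [CommRing R] {p : R[X]}
    {t : R} {n k : ℕ} (h : (X - C t) ^ n ∣ p) (hk : k < n) : (derivative^[k] p).IsRoot t :=
  dvd_iff_isRoot.mp <|
    (dvd_pow_self _ (Nat.sub_ne_zero_of_lt hk)).trans (pow_sub_dvd_iterate_derivative_of_pow_dvd k h)

noncomputable def rodriguesPoly (j : ℕ) : ℂ[X] := (X ^ 2 - X) ^ j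

theorem pow_X_sub_C_dvd_rodriguesPoly (j : ℕ) {t : ℝ} (ht : t = 0 ∨ t = 1) :
    (X - C (t : ℂ)) ^ j ∣ rodriguesPoly j := by
  have hfactor : (X ^ 2 - X : ℂ[X]) = (X - C 0) * (X - C 1) := by
    simp only [map_zero, map_one]
    ring
  rw [rodriguesPoly, hfactor]
  refine pow_dvd_pow_of_dvd ?_ j
  rcases ht with rfl | rfl <;> simp

theorem ofReal_legendreP (j : ℕ) (x : ℝ) :
    (legendreP j x : ℂ) =
      (√(2 * j + 1) / j ! : ℝ) * (derivative^[j] (rodriguesPoly j)).eval (x : ℂ) := by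
  have hreal : (fun y : ℝ => (y ^ 2 - y) ^ j) = fun y => ((X ^ 2 - X) ^ j : ℝ[X]).eval y := by
    simp
  rw [legendreP, hreal, Polynomial.iteratedDeriv_eval, Complex.ofReal_mul]
  congr 1
  beta_reduce
  rw [← Complex.ofRealHom_eq_coe, ← eval₂_at_apply, ← eval_map, ← iterate_derivative_map]
  simp [rodriguesPoly]

section IntegrationByParts

variable {a b : ℝ} {ξ : ℂ}

theorem hasDerivAt_inv_sub_ofReal_pow (m : ℕ) {c : ℝ} (hc : (c : ℂ) ≠ ξ) :
    HasDerivAt (fun x : ℝ => ((ξ - x) ^ (m + 1))⁻¹) ((m + 1) / (ξ - c) ^ (m + 2)) c := by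
  have hne : ξ - c ≠ 0 := sub_ne_zero.mpr hc.symm
  have h := (((hasDerivAt_id' (c : ℂ)).const_sub ξ).fun_pow (m + 1)).fun_inv (pow_ne_zero _ hne)
  convert h.comp_ofReal using 1
  simp only [Nat.add_sub_cancel]
  push_cast
  field_simp
  ring

theorem integral_derivative_div_pow (p : ℂ[X]) (ha : p.IsRoot a) (hb : p.IsRoot b)
    (hξ : ∀ c ∈ [[a, b]], (c : ℂ) ≠ ξ) (m : ℕ) :
    ∫ c in a..b, (derivative p).eval (c : ℂ) / (ξ - c) ^ (m + 1) =
      -(m + 1) * ∫ c in a..b, p.eval (c : ℂ) / (ξ - c) ^ (m + 2) := by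
  have hcont : ∀ n, ContinuousOn (fun x : ℝ => ((ξ - x) ^ n)⁻¹) [[a, b]] := fun n =>
    ((continuous_const.sub Complex.continuous_ofReal).pow n).continuousOn.inv₀
      fun c hc => pow_ne_zero _ (sub_ne_zero.mpr (hξ c hc).symm)
  have hparts := integral_mul_deriv_eq_deriv_mul
    (u := fun x : ℝ => p.eval (x : ℂ)) (v := fun x : ℝ => ((ξ - x) ^ (m + 1))⁻¹)
    (fun x _ => (p.hasDerivAt (x : ℂ)).comp_ofReal)
    (fun x hx => hasDerivAt_inv_sub_ofReal_pow m (hξ x hx))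
    ((p.derivative.continuous.comp Complex.continuous_ofReal).intervalIntegrable a b)
    ((continuousOn_const.mul (hcont (m + 2))).intervalIntegrable)
  simp only [ha.eq_zero, hb.eq_zero, zero_mul, sub_zero, zero_sub] at hparts
  have hconst : ∫ x in a..b, p.eval (x : ℂ) * ((m + 1) / (ξ - x) ^ (m + 2)) =
      (m + 1) * ∫ x in a..b, p.eval (x : ℂ) / (ξ - x) ^ (m + 2) := by
    rw [← integral_const_mul]
    congr 1 with x
    ring
  simp only [hconst, ← div_eq_mul_inv] at hparts
  linear_combination hparts

theorem integral_iterate_derivative_div_pow (k : ℕ) (p : ℂ[X])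
    (ha : (X - C (a : ℂ)) ^ k ∣ p) (hb : (X - C (b : ℂ)) ^ k ∣ p)
    (hξ : ∀ c ∈ [[a, b]], (c : ℂ) ≠ ξ) (m : ℕ) :
    ∫ c in a..b, (derivative^[k] p).eval (c : ℂ) / (ξ - c) ^ (m + 1) =
      (-1) ^ k * (m + 1).ascFactorial k * ∫ c in a..b, p.eval (c : ℂ) / (ξ - c) ^ (m + k + 1) := by
  induction k generalizing m with
  | zero => simp
  | succ k ih =>
    have hdvd : ∀ t : ℂ, (X - C t) ^ (k + 1) ∣ p → (X - C t) ^ k ∣ p :=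
      fun t h => (pow_dvd_pow _ k.le_succ).trans h
    rw [Function.iterate_succ_apply', integral_derivative_div_pow _
      (isRoot_iterate_derivative_of_pow_dvd ha k.lt_succ_self)
      (isRoot_iterate_derivative_of_pow_dvd hb k.lt_succ_self) hξ,
      ih (hdvd _ ha) (hdvd _ hb), show m + 1 + k + 1 = m + (k + 1) + 1 by ring,
      Nat.ascFactorial_succ, ← Nat.succ_ascFactorial]
    push_cast
    ring

end IntegrationByParts

theorem ofReal_ne_of_one_lt_norm {ξ : ℂ} (hξ : 1 < ‖ξ‖) {c : ℝ} (hc : c ∈ [[(0 : ℝ), 1]]) :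
    (c : ℂ) ≠ ξ := by
  rintro rfl
  rw [uIcc_of_le zero_le_one] at hc
  rw [Complex.norm_real, Real.norm_of_nonneg hc.1] at hξ
  linarith [hc.2]

theorem legendreQ_eq_integral_rodriguesPoly (j : ℕ) {ξ : ℂ} (hξ : 1 < ‖ξ‖) :
    legendreQ j ξ = (√(2 * j + 1) / j ! : ℝ) * ((-1) ^ j * j ! *
      ∫ c in (0 : ℝ)..1, (rodriguesPoly j).eval (c : ℂ) / (ξ - c) ^ (j + 1)) := by
  have hparts := integral_iterate_derivative_div_pow j _
    (pow_X_sub_C_dvd_rodriguesPoly j (.inl rfl)) (pow_X_sub_C_dvd_rodriguesPoly j (.inr rfl))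
    (fun c hc => ofReal_ne_of_one_lt_norm hξ hc) 0
  simp only [zero_add, pow_one, Nat.one_ascFactorial] at hparts
  simp_rw [legendreQ, ofReal_legendreP, mul_div_assoc]
  rw [integral_const_mul, hparts]

theorem norm_rodriguesPoly_div_le {ξ : ℂ} {ρ : ℝ} (hρ : 1 < ρ) (hξ : ‖ξ‖ = ρ) {c : ℝ}
    (hc : c ∈ Icc (0 : ℝ) 1) (j : ℕ) :
    ‖(rodriguesPoly j).eval (c : ℂ) / (ξ - c) ^ (j + 1)‖ ≤ 1 / ((ρ - 1) * ρ ^ j) := by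
  obtain ⟨hc0, hc1⟩ := hc
  set d := ‖ξ - c‖ with hd_def
  have hd : ρ - c ≤ d := by
    simpa [hξ, abs_of_nonneg hc0] using norm_sub_norm_le ξ (c : ℂ)
  have hd0 : 0 < d := by linarith
  have heval : ‖(rodriguesPoly j).eval (c : ℂ)‖ = (c - c ^ 2) ^ j := by
    rw [rodriguesPoly, eval_pow, norm_pow, eval_sub, eval_pow, eval_X]
    congr 1
    rw [show (c : ℂ) ^ 2 - c = ((c ^ 2 - c : ℝ) : ℂ) by push_cast; ring, Complex.norm_real,
      Real.norm_of_nonpos (by nlinarith)]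
    ring
  have hratio : (c - c ^ 2) / d ≤ 1 / ρ := by
    rw [div_le_div_iff₀ hd0 (by linarith)]
    -- ρ - c - ρ (c - c²) = ρ (1 - c)² + c (ρ - 1)
    nlinarith [mul_nonneg hc0 (sub_nonneg.mpr hρ.le), sq_nonneg (1 - c)]
  have hinv : 1 / d ≤ 1 / (ρ - 1) := one_div_le_one_div_of_le (by linarith) (by linarith)
  calc ‖(rodriguesPoly j).eval (c : ℂ) / (ξ - c) ^ (j + 1)‖
      = ((c - c ^ 2) / d) ^ j * (1 / d) := by
        rw [norm_div, norm_pow, heval, ← hd_def, div_pow, div_mul_div_comm, mul_one, ← pow_succ]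
    _ ≤ (1 / ρ) ^ j * (1 / (ρ - 1)) := by
        gcongr
        exact div_nonneg (by nlinarith) hd0.le
    _ = 1 / ((ρ - 1) * ρ ^ j) := by
        rw [one_div_pow]
        field_simp

theorem norm_integral_rodriguesPoly_div_le {ξ : ℂ} {ρ : ℝ} (hρ : 1 < ρ) (hξ : ‖ξ‖ = ρ) (j : ℕ) :
    ‖∫ c in (0 : ℝ)..1, (rodriguesPoly j).eval (c : ℂ) / (ξ - c) ^ (j + 1)‖ ≤
      1 / ((ρ - 1) * ρ ^ j) := by
  have hbound := norm_integral_le_of_norm_le_const fun c (hc : c ∈ Ι (0 : ℝ) 1) =>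
    norm_rodriguesPoly_div_le hρ hξ (Ioc_subset_Icc_self (uIoc_of_le (zero_le_one (α := ℝ)) ▸ hc)) j
  simpa using hbound

/-- Lemma 2.3: for `ρ > 1` and `|ξ| = ρ`, `|Q_j(ξ)| ≤ √(2j+1)/((ρ-1)ρ^j)`. -/
theorem legendreQ_bound (j : ℕ) (ρ : ℝ) (hρ : 1 < ρ) (ξ : ℂ) (hξ : ‖ξ‖ = ρ) :
    ‖legendreQ j ξ‖ ≤ Real.sqrt (2 * (j : ℝ) + 1) / ((ρ - 1) * ρ ^ j) := by
  calc ‖legendreQ j ξ‖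
      = √(2 * j + 1) / j ! * j ! *
          ‖∫ c in (0 : ℝ)..1, (rodriguesPoly j).eval (c : ℂ) / (ξ - c) ^ (j + 1)‖ := by
        rw [legendreQ_eq_integral_rodriguesPoly j (hξ ▸ hρ), norm_mul, norm_mul, norm_mul,
          norm_pow, norm_neg, norm_one, one_pow, one_mul, Complex.norm_real,
          Complex.norm_natCast, Real.norm_of_nonneg (by positivity), mul_assoc]
    _ ≤ √(2 * j + 1) / j ! * j ! * (1 / ((ρ - 1) * ρ ^ j)) := by
        gcongr
        exact norm_integral_rodriguesPoly_div_le hρ hξ j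
    _ = √(2 * j + 1) / ((ρ - 1) * ρ ^ j) := by field_simp
end

section
/- Let E be a complex Banach space, ρ > 1, and let G : ℂ → E be analytic on an open set containing the closed ball B̄(0, ρ). Then for every j ≥ 0, ∫_0^1 P_j(c) G(c) dc = (1/(2πi)) ∮_{|ξ|=ρ} G(ξ) Q_j(ξ) dξ, where Q_j(ξ) = ∫_0^1 P_j(c)/(ξ − c) dc and the contour integral is over the circle of radius ρ centered at 0, traversed counterclockwise. -/
open MeasureTheory Metric Complex intervalIntegral

lemma legendreP_continuous (j : ℕ) : Continuous (legendreP j) := by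
  have h : ContDiff ℝ (⊤ : ℕ∞) (fun y : ℝ => (y ^ 2 - y) ^ j) := by fun_prop
  exact continuous_const.mul (h.continuous_iteratedDeriv j (mod_cast le_top))

/-- Key step in Theorem 2.5: if `G` is analytic on an open set containing `B̄(0, ρ)` with
`ρ > 1`, then `∫_0^1 P_j(c) G(c) dc = (2πi)⁻¹ ∮_{|ξ|=ρ} G(ξ) Q_j(ξ) dξ`. -/
theorem integral_legendreP_eq_circleIntegral
    {E : Type*} [NormedAddCommGroup E] [NormedSpace ℂ E] [CompleteSpace E]
    (ρ : ℝ) (hρ : 1 < ρ) (G : ℂ → E)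
    (U : Set ℂ) (hU : IsOpen U) (hball : Metric.closedBall (0:ℂ) ρ ⊆ U)
    (hG : ∀ z ∈ U, AnalyticAt ℂ G z) (j : ℕ) :
    (∫ c in (0:ℝ)..1, legendreP j c • G (c : ℂ)) =
      (2 * (Real.pi : ℂ) * Complex.I)⁻¹ • ∮ ξ in C(0, ρ), legendreQ j ξ • G ξ := by
  have hρ0 : 0 < ρ := lt_trans one_pos hρ
  have hGU : ContinuousOn G U := fun z hz => (hG z hz).continuousAt.continuousWithinAt
  have hGd : DifferentiableOn ℂ G (closedBall 0 ρ) := fun z hz =>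
    ((hG z (hball hz)).differentiableAt).differentiableWithinAt
  have hmem : ∀ c ∈ Set.Icc (0:ℝ) 1, (c : ℂ) ∈ ball (0:ℂ) ρ := by
    intro c hc
    rw [mem_ball_zero_iff]
    simp only [Complex.norm_real, Real.norm_eq_abs, _root_.abs_of_nonneg hc.1]
    exact lt_of_le_of_lt hc.2 hρ
  have hne : ∀ c ∈ Set.Icc (0:ℝ) 1, ∀ θ : ℝ, circleMap 0 ρ θ - (c:ℂ) ≠ 0 := by
    intro c hc θ
    have h1 : ‖circleMap 0 ρ θ‖ = ρ := by
      rw [norm_circleMap_zero]; exact abs_of_pos hρ0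
    intro h
    rw [sub_eq_zero] at h
    have := mem_ball_zero_iff.mp (hmem c hc)
    rw [← h] at this
    simp only [h1] at this
    exact lt_irrefl _ this
  have hcauchy : ∀ c ∈ Set.Icc (0:ℝ) 1,
      G (c:ℂ) = (2 * (Real.pi : ℂ) * Complex.I)⁻¹ •
        ∮ z in C(0, ρ), (z - (c:ℂ))⁻¹ • G z := by
    intro c hc
    rw [hGd.circleIntegral_sub_inv_smul (hmem c hc), inv_smul_smul₀ Complex.two_pi_I_ne_zero]
  -- step 1: rewrite LHS
  have step1 : (∫ c in (0:ℝ)..1, legendreP j c • G (c : ℂ)) =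
      (2 * (Real.pi : ℂ) * Complex.I)⁻¹ •
        ∫ c in (0:ℝ)..1, ((legendreP j c : ℂ) • ∮ z in C(0, ρ), (z - (c:ℂ))⁻¹ • G z) := by
    rw [← intervalIntegral.integral_smul]
    apply intervalIntegral.integral_congr
    intro c hc
    rw [Set.uIcc_of_le (by norm_num : (0:ℝ) ≤ 1)] at hc
    simp only
    rw [hcauchy c hc, Complex.coe_smul]
    exact smul_comm _ _ _
  rw [step1]
  congr 1
  -- main Fubini step
  have h2π : (0:ℝ) ≤ 2 * Real.pi := by positivity
  set F : ℝ × ℝ → E := fun p =>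
    ((legendreP j p.1 : ℂ) * (circleMap 0 ρ p.2 * Complex.I) *
      (circleMap 0 ρ p.2 - (p.1:ℂ))⁻¹) • G (circleMap 0 ρ p.2) with hF
  have hFcont : ContinuousOn F (Set.Icc (0:ℝ) 1 ×ˢ Set.Icc (0:ℝ) (2 * Real.pi)) := by
    apply ContinuousOn.smul
    · apply ContinuousOn.mul
      · exact (Complex.continuous_ofReal.comp ((legendreP_continuous j).comp
          continuous_fst)).continuousOn.mul
          (((continuous_circleMap 0 ρ).comp continuous_snd).mul continuous_const).continuousOn
      · apply ContinuousOn.inv₀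
        · exact (((continuous_circleMap 0 ρ).comp continuous_snd).sub
            (Complex.continuous_ofReal.comp continuous_fst)).continuousOn
        · intro p hp; exact hne p.1 hp.1 p.2
    · apply hGU.comp ((continuous_circleMap 0 ρ).comp continuous_snd).continuousOn
      intro p _
      exact hball (sphere_subset_closedBall (circleMap_mem_sphere 0 hρ0.le p.2))
  have hFint : Integrable F ((volume.restrict (Set.Ioc (0:ℝ) 1)).prod
      (volume.restrict (Set.Ioc (0:ℝ) (2 * Real.pi)))) := by
    rw [Measure.prod_restrict]
    exact (hFcont.integrableOn_compact (isCompact_Icc.prod isCompact_Icc)).mono_set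
      (Set.prod_mono Set.Ioc_subset_Icc_self Set.Ioc_subset_Icc_self)
  have fubini : (∫ c in Set.Ioc (0:ℝ) 1, ∫ θ in Set.Ioc (0:ℝ) (2*Real.pi), F (c, θ)) =
      ∫ θ in Set.Ioc (0:ℝ) (2*Real.pi), ∫ c in Set.Ioc (0:ℝ) 1, F (c, θ) := by
    exact MeasureTheory.integral_integral_swap (f := fun c θ => F (c, θ)) hFint
  -- Now relate both sides to these iterated integrals
  calc (∫ c in (0:ℝ)..1, ((legendreP j c : ℂ) • ∮ z in C(0, ρ), (z - (c:ℂ))⁻¹ • G z))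
      = ∫ c in Set.Ioc (0:ℝ) 1, ∫ θ in Set.Ioc (0:ℝ) (2*Real.pi), F (c, θ) := by
        rw [intervalIntegral.integral_of_le (by norm_num : (0:ℝ) ≤ 1)]
        apply setIntegral_congr_fun measurableSet_Ioc
        intro c _
        simp only [circleIntegral, deriv_circleMap,
          intervalIntegral.integral_of_le h2π]
        rw [← MeasureTheory.integral_smul]
        apply setIntegral_congr_fun measurableSet_Ioc
        intro θ _
        simp only [hF, smul_smul]
        ring_nf
    _ = ∫ θ in Set.Ioc (0:ℝ) (2*Real.pi), ∫ c in Set.Ioc (0:ℝ) 1, F (c, θ) := fubini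
    _ = ∮ ξ in C(0, ρ), legendreQ j ξ • G ξ := by
        simp only [circleIntegral, deriv_circleMap, intervalIntegral.integral_of_le h2π]
        apply setIntegral_congr_fun measurableSet_Ioc
        intro θ _
        simp only [legendreQ]
        rw [← intervalIntegral.integral_smul_const, ← intervalIntegral.integral_smul,
          intervalIntegral.integral_of_le (by norm_num : (0:ℝ) ≤ 1)]
        apply setIntegral_congr_fun measurableSet_Ioc
        intro c _
        simp only [hF, smul_smul, div_eq_mul_inv]
        ring_nf
end
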